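/- Let w : ℝ → ℝ be continuous and 1-periodic, with m₁ = min_{y∈[0,1]} w(y) and m₂ = max_{y∈[0,1]} w(y). Then for every x ∈ ℝ, -∫_0^1 ((e^y - e^{1-y})/(2(e-1))) · w(x - y) dy ≤ (m₂ - m₁)/2. -/

import Mathlib

open MeasureTheory Real Set
open scoped Interval

/-!
The kernel `K' y = (exp y - exp (1 - y)) / (2 (e - 1))` has mean zero on `[0, 1]`, so subtracting
the midrange `(m₁ + m₂) / 2` from `w` does not change the integral. Afterwards the integrand is a
product of `|K'| ≤ 1/2` and a function of size at most `(m₂ - m₁) / 2`, which gives even the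
sharper bound `(m₂ - m₁) / 4`.
-/

theorem abs_intervalIntegral_mul_le_of_integral_eq_zero {K g : ℝ → ℝ} {a b A m₁ m₂ : ℝ}
    (hK : IntervalIntegrable K volume a b)
    (hKg : IntervalIntegrable (fun y => K y * g y) volume a b)
    (hK0 : ∫ y in a..b, K y = 0) (hKA : ∀ y ∈ Ι a b, |K y| ≤ A)
    (hg : ∀ y ∈ Ι a b, g y ∈ Icc m₁ m₂) :
    |∫ y in a..b, K y * g y| ≤ A * ((m₂ - m₁) / 2) * |b - a| := by
  have hcentre : ∫ y in a..b, K y * g y = ∫ y in a..b, K y * (g y - (m₁ + m₂) / 2) := by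
    simp only [mul_sub]
    rw [intervalIntegral.integral_sub hKg (hK.mul_const _), intervalIntegral.integral_mul_const,
      hK0, zero_mul, sub_zero]
  rw [hcentre, ← Real.norm_eq_abs]
  refine intervalIntegral.norm_integral_le_of_norm_le_const fun y hy => ?_
  have hgc : |g y - (m₁ + m₂) / 2| ≤ (m₂ - m₁) / 2 := by
    obtain ⟨h₁, h₂⟩ := hg y hy
    exact abs_sub_le_iff.2 ⟨by linarith, by linarith⟩
  rw [Real.norm_eq_abs, abs_mul]
  exact mul_le_mul (hKA y hy) hgc (abs_nonneg _) ((abs_nonneg _).trans (hKA y hy))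

noncomputable def kernelDeriv (y : ℝ) : ℝ :=
  (exp y - exp (1 - y)) / (2 * (exp 1 - 1))

theorem continuous_kernelDeriv : Continuous kernelDeriv := by
  unfold kernelDeriv
  fun_prop

theorem integral_kernelDeriv : ∫ y in (0 : ℝ)..1, kernelDeriv y = 0 := by
  have hreflect : ∫ y in (0 : ℝ)..1, exp (1 - y) = ∫ y in (0 : ℝ)..1, exp y := by
    simp [intervalIntegral.integral_comp_sub_left (fun y => exp y) (1 : ℝ) (a := 0) (b := 1)]
  simp only [kernelDeriv, intervalIntegral.integral_div]
  have hcont : Continuous fun y : ℝ => exp (1 - y) := by fun_prop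
  rw [intervalIntegral.integral_sub (continuous_exp.intervalIntegrable _ _)
    (hcont.intervalIntegrable _ _), hreflect, sub_self, zero_div]

theorem abs_kernelDeriv_le {y : ℝ} (hy : y ∈ Icc (0 : ℝ) 1) : |kernelDeriv y| ≤ 1 / 2 := by
  obtain ⟨hy₀, hy₁⟩ := hy
  have he : 0 < exp 1 - 1 := by linarith [add_one_lt_exp (one_ne_zero (α := ℝ))]
  have h₁ : 1 ≤ exp y := one_le_exp hy₀
  have h₂ : exp y ≤ exp 1 := exp_le_exp.2 hy₁
  have h₃ : 1 ≤ exp (1 - y) := one_le_exp (by linarith)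
  have h₄ : exp (1 - y) ≤ exp 1 := exp_le_exp.2 (by linarith)
  have hnum : |exp y - exp (1 - y)| ≤ exp 1 - 1 := abs_sub_le_iff.2 ⟨by linarith, by linarith⟩
  rw [kernelDeriv, abs_div, abs_of_pos (show (0 : ℝ) < 2 * (exp 1 - 1) by linarith),
    div_le_iff₀ (by linarith)]
  linarith

theorem neg_integral_kernel_deriv_le (w : ℝ → ℝ) (hw : Continuous w)
    (hper : ∀ x : ℝ, w (x + 1) = w x) (m₁ m₂ : ℝ)
    (hm₁ : IsLeast (w '' Set.Icc (0 : ℝ) 1) m₁)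
    (hm₂ : IsGreatest (w '' Set.Icc (0 : ℝ) 1) m₂) (x : ℝ) :
    -∫ y in (0:ℝ)..1,
        ((Real.exp y - Real.exp (1 - y)) / (2 * (Real.exp 1 - 1))) * w (x - y)
      ≤ (m₂ - m₁) / 2 := by
  have hrange : w '' Icc (0 : ℝ) 1 = range w := by
    simpa using Function.Periodic.image_Icc hper one_pos (0 : ℝ)
  rw [hrange] at hm₁ hm₂
  have hbounds (z : ℝ) : w z ∈ Icc m₁ m₂ := ⟨hm₁.2 ⟨z, rfl⟩, hm₂.2 ⟨z, rfl⟩⟩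
  have hw' : Continuous fun y => w (x - y) := hw.comp (continuous_sub_left x)
  have hestimate := abs_intervalIntegral_mul_le_of_integral_eq_zero
    (continuous_kernelDeriv.intervalIntegrable 0 1)
    ((continuous_kernelDeriv.mul hw').intervalIntegrable 0 1) integral_kernelDeriv
    (fun y hy => abs_kernelDeriv_le <|
      Ioc_subset_Icc_self (uIoc_of_le (zero_le_one (α := ℝ)) ▸ hy))
    (fun y _ => hbounds (x - y))
  have hm : m₁ ≤ m₂ := (hbounds 0).1.trans (hbounds 0).2
  calc _ ≤ |∫ y in (0 : ℝ)..1, kernelDeriv y * w (x - y)| := neg_le_abs _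
    _ ≤ 1 / 2 * ((m₂ - m₁) / 2) * |1 - 0| := hestimate
    _ ≤ (m₂ - m₁) / 2 := by norm_num; linarith
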